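/- arXiv:1706.04305 — 7 statements merged into one kernel-verified Lean document; each statement's English description precedes it below -/
import Mathlib

section
/- Let V be a finite-dimensional real inner product space equipped with an almost contact metric structure (φ, ξ, η), and let W ⊆ V be a subspace with ξ ∈ W. Then W is pointwise slant (i.e., the angle between φX and W is the same for every X ∈ W not proportional to ξ) if and only if there exists θ ∈ [0, π/2] such that P²X = cos²θ · (−X + η(X)ξ) for all X ∈ W; moreover, in that case θ equals the common angle between φX and W for all X ∈ W not proportional to ξ. -/
/-!
Write `P` for the tangential part of `φ` along `W`. Skew-symmetry of `φ` gives
`⟪P (P X), Y⟫ = -⟪P X, P Y⟫` for `Y ∈ W`, and since `P (P X) - cos² θ • φ (φ X)` lies in `W`,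
polarization shows that `P² = cos² θ • φ²` on `W` exactly when `‖P X‖ = cos θ * ‖φ X‖` on `W`.
The cosine of the angle between a vector and its orthogonal projection is the ratio of their norms,
so for `θ ∈ [0, π/2]` this says that the angle between `φ X` and `P X` is `θ` whenever `φ X ≠ 0`,
i.e. whenever `X` is not a multiple of `ξ`. That angle never exceeds `π / 2`, so a common value of
it is an admissible `θ`.
-/

open RealInnerProductSpace InnerProductGeometry Real Set

namespace Submodule

variable {E : Type*} [NormedAddCommGroup E] [InnerProductSpace ℝ E]
  (K : Submodule ℝ E) [K.HasOrthogonalProjection]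

theorem real_inner_starProjection_right_eq_norm_sq (v : E) :
    ⟪v, K.starProjection v⟫ = ‖K.starProjection v‖ ^ 2 := by
  rw [← K.starProjection_eq_self_iff.mpr (K.starProjection_apply_mem v),
    ← inner_starProjection_left_eq_right, real_inner_self_eq_norm_sq,
    K.starProjection_eq_self_iff.mpr (K.starProjection_apply_mem v)]

theorem cos_angle_starProjection (v : E) :
    cos (angle v (K.starProjection v)) = ‖K.starProjection v‖ / ‖v‖ := by
  rw [cos_angle, real_inner_starProjection_right_eq_norm_sq]
  rcases eq_or_ne ‖K.starProjection v‖ 0 with h | h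
  · simp [h]
  · field_simp

theorem angle_starProjection_le_pi_div_two (v : E) :
    angle v (K.starProjection v) ≤ π / 2 := by
  rw [angle, arccos_le_pi_div_two, ← cos_angle, cos_angle_starProjection]
  positivity

theorem angle_starProjection_eq_iff {v : E} (hv : v ≠ 0) {θ : ℝ} (hθ : θ ∈ Icc 0 π) :
    angle v (K.starProjection v) = θ ↔ ‖K.starProjection v‖ = cos θ * ‖v‖ := by
  rw [← injOn_cos.eq_iff ⟨angle_nonneg _ _, angle_le_pi _ _⟩ hθ, cos_angle_starProjection,
    div_eq_iff (norm_ne_zero_iff.mpr hv)]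

end Submodule

section Polarization

variable {E F G : Type*} [NormedAddCommGroup E] [InnerProductSpace ℝ E]
  [NormedAddCommGroup F] [InnerProductSpace ℝ F] [NormedAddCommGroup G] [InnerProductSpace ℝ G]

theorem real_inner_map_map_eq_of_norm_sq_eq {A : E →ₗ[ℝ] F} {B : E →ₗ[ℝ] G} {K : Submodule ℝ E}
    {c : ℝ} (h : ∀ x ∈ K, ‖A x‖ ^ 2 = c * ‖B x‖ ^ 2) {x y : E} (hx : x ∈ K) (hy : y ∈ K) :
    ⟪A x, A y⟫ = c * ⟪B x, B y⟫ := by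
  have hxy := h (x + y) (K.add_mem hx hy)
  rw [map_add, map_add] at hxy
  rw [real_inner_eq_norm_add_mul_self_sub_norm_mul_self_sub_norm_mul_self_div_two,
    real_inner_eq_norm_add_mul_self_sub_norm_mul_self_sub_norm_mul_self_div_two]
  linear_combination (hxy - h x hx - h y hy) / 2

end Polarization

namespace Submodule

variable {V : Type*} [NormedAddCommGroup V] [InnerProductSpace ℝ V]
  (W : Submodule ℝ V) [W.HasOrthogonalProjection] (φ : V →ₗ[ℝ] V)

noncomputable def tangentialPart : V →ₗ[ℝ] V :=
  (W.starProjection : V →ₗ[ℝ] V) ∘ₗ φ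

variable {W φ}

@[simp]
theorem tangentialPart_apply (X : V) : W.tangentialPart φ X = W.starProjection (φ X) := rfl

theorem tangentialPart_mem (X : V) : W.tangentialPart φ X ∈ W :=
  W.starProjection_apply_mem _

theorem inner_tangentialPart_of_mem (X : V) {Y : V} (hY : Y ∈ W) :
    ⟪W.tangentialPart φ X, Y⟫ = ⟪φ X, Y⟫ := by
  rw [tangentialPart_apply, inner_starProjection_left_eq_right, W.starProjection_eq_self_iff.mpr hY]

theorem inner_tangentialPart_tangentialPart (hφ : ∀ X Y, ⟪φ X, Y⟫ = -⟪X, φ Y⟫) (X : V) {Y : V}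
    (hY : Y ∈ W) :
    ⟪W.tangentialPart φ (W.tangentialPart φ X), Y⟫ =
      -⟪W.tangentialPart φ X, W.tangentialPart φ Y⟫ := by
  rw [inner_tangentialPart_of_mem _ hY, hφ, real_inner_comm (W.tangentialPart φ Y),
    inner_tangentialPart_of_mem _ (tangentialPart_mem X), real_inner_comm]

theorem tangentialPart_tangentialPart_eq_smul_iff (hφ : ∀ X Y, ⟪φ X, Y⟫ = -⟪X, φ Y⟫)
    (hφW : ∀ X ∈ W, φ (φ X) ∈ W) (c : ℝ) :
    (∀ X ∈ W, W.tangentialPart φ (W.tangentialPart φ X) = c • φ (φ X)) ↔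
      ∀ X ∈ W, ‖W.tangentialPart φ X‖ ^ 2 = c * ‖φ X‖ ^ 2 := by
  constructor
  · intro h X hX
    have := inner_tangentialPart_tangentialPart hφ X hX
    rw [h X hX, real_inner_smul_left, hφ, real_inner_self_eq_norm_sq,
      real_inner_self_eq_norm_sq] at this
    linarith
  · intro h X hX
    set D := W.tangentialPart φ (W.tangentialPart φ X) - c • φ (φ X)
    have hD : D ∈ W := W.sub_mem (tangentialPart_mem _) (W.smul_mem c (hφW X hX))
    have hDW : ∀ Y ∈ W, ⟪D, Y⟫ = 0 := fun Y hY => by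
      rw [inner_sub_left, inner_tangentialPart_tangentialPart hφ X hY, real_inner_smul_left, hφ,
        real_inner_map_map_eq_of_norm_sq_eq h hX hY]
      ring
    exact sub_eq_zero.mp (inner_self_eq_zero.mp (hDW D hD))

end Submodule

section AlmostContact

variable {V : Type*} [NormedAddCommGroup V] [InnerProductSpace ℝ V]

structure IsAlmostContactMetric (φ : V →ₗ[ℝ] V) (ξ : V) : Prop where
  norm_eq_one : ‖ξ‖ = 1
  map_map : ∀ X, φ (φ X) = -X + ⟪X, ξ⟫ • ξ
  inner_map_map : ∀ X Y, ⟪φ X, φ Y⟫ = ⟪X, Y⟫ - ⟪X, ξ⟫ * ⟪Y, ξ⟫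

namespace IsAlmostContactMetric

variable {φ : V →ₗ[ℝ] V} {ξ : V} (h : IsAlmostContactMetric φ ξ)
include h

theorem map_xi : φ ξ = 0 := by
  have hξξ : ⟪ξ, ξ⟫ = 1 := by rw [real_inner_self_eq_norm_sq, h.norm_eq_one, one_pow]
  have := h.inner_map_map ξ ξ
  rw [hξξ, mul_one, sub_self] at this
  exact inner_self_eq_zero.mp this

theorem inner_map_left_xi (X : V) : ⟪φ X, ξ⟫ = 0 := by
  have hξ : ξ ≠ 0 := norm_ne_zero_iff.mp (by rw [h.norm_eq_one]; exact one_ne_zero)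
  have h3 := h.map_map (φ X)
  rw [h.map_map X, map_add, map_neg, map_smul, h.map_xi, smul_zero, add_zero,
    left_eq_add] at h3
  exact (smul_eq_zero.mp h3).resolve_right hξ

theorem inner_map_left (X Y : V) : ⟪φ X, Y⟫ = -⟪X, φ Y⟫ := by
  have := h.inner_map_map X (φ Y)
  rw [h.map_map, inner_add_right, inner_neg_right, real_inner_smul_right, h.inner_map_left_xi,
    h.inner_map_left_xi, mul_zero, mul_zero, add_zero, sub_zero] at this
  linarith

theorem map_eq_zero_iff {X : V} : φ X = 0 ↔ ∃ c : ℝ, X = c • ξ := by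
  constructor
  · intro hX
    have := h.map_map X
    rw [hX, map_zero, eq_comm, neg_add_eq_zero] at this
    exact ⟨_, this⟩
  · rintro ⟨c, rfl⟩
    rw [map_smul, h.map_xi, smul_zero]

theorem forall_angle_eq_iff {W : Submodule ℝ V} [W.HasOrthogonalProjection] (hξW : ξ ∈ W)
    {θ : ℝ} (hθ : θ ∈ Icc 0 (π / 2)) :
    (∀ X ∈ W, (¬ ∃ c : ℝ, X = c • ξ) → angle (φ X) (W.tangentialPart φ X) = θ) ↔
      ∀ X ∈ W, W.tangentialPart φ (W.tangentialPart φ X) = cos θ ^ 2 • (-X + ⟪X, ξ⟫ • ξ) := by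
  have hθπ : θ ∈ Icc 0 π := ⟨hθ.1, hθ.2.trans (by linarith [pi_pos])⟩
  have hcos : 0 ≤ cos θ := cos_nonneg_of_mem_Icc ⟨by linarith [hθ.1, pi_pos], hθ.2⟩
  calc _ ↔ ∀ X ∈ W, ‖W.tangentialPart φ X‖ = cos θ * ‖φ X‖ := by
        refine forall₂_congr fun X _ => ?_
        rw [← h.map_eq_zero_iff]
        by_cases hX : φ X = 0
        · simp [hX]
        · simp only [hX, not_false_eq_true, forall_const, Submodule.tangentialPart_apply,
            W.angle_starProjection_eq_iff hX hθπ]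
    _ ↔ ∀ X ∈ W, ‖W.tangentialPart φ X‖ ^ 2 = cos θ ^ 2 * ‖φ X‖ ^ 2 := by
        refine forall₂_congr fun X _ => ?_
        rw [← mul_pow, pow_left_inj₀ (norm_nonneg _) (by positivity) two_ne_zero]
    _ ↔ _ := by
        rw [← Submodule.tangentialPart_tangentialPart_eq_smul_iff h.inner_map_left]
        · simp only [h.map_map]
        · intro X hX
          rw [h.map_map]
          exact W.add_mem (W.neg_mem hX) (W.smul_mem _ hξW)

end IsAlmostContactMetric

end AlmostContact

theorem stmt_0_general {V : Type*} [NormedAddCommGroup V] [InnerProductSpace ℝ V]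
    [FiniteDimensional ℝ V]
    (φ : V →ₗ[ℝ] V) (ξ : V) (η : V → ℝ) (hη : ∀ X, η X = ⟪X, ξ⟫)
    (hξ : ‖ξ‖ = 1)
    (hφ2 : ∀ X : V, φ (φ X) = -X + η X • ξ)
    (hmetric : ∀ X Y : V, ⟪φ X, φ Y⟫ = ⟪X, Y⟫ - η X * η Y)
    (W : Submodule ℝ V) (hξW : ξ ∈ W)
    (P : V → V) (hP : ∀ X, P X = (W.orthogonalProjectionOnto (φ X) : V)) :
    ((∃ α : ℝ, ∀ X ∈ W, (¬ ∃ c : ℝ, X = c • ξ) →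
        InnerProductGeometry.angle (φ X) (P X) = α) ↔
      (∃ θ ∈ Set.Icc (0 : ℝ) (Real.pi / 2),
        ∀ X ∈ W, P (P X) = Real.cos θ ^ 2 • (-X + η X • ξ))) ∧
    (∀ θ ∈ Set.Icc (0 : ℝ) (Real.pi / 2),
      (∀ X ∈ W, P (P X) = Real.cos θ ^ 2 • (-X + η X • ξ)) →
      ∀ X ∈ W, (¬ ∃ c : ℝ, X = c • ξ) →
        InnerProductGeometry.angle (φ X) (P X) = θ) := by
  obtain rfl : η = fun X => ⟪X, ξ⟫ := funext hη
  obtain rfl : P = W.tangentialPart φ := funext hP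
  have hφ : IsAlmostContactMetric φ ξ := ⟨hξ, hφ2, hmetric⟩
  have slant θ (hθ : θ ∈ Icc 0 (π / 2)) := hφ.forall_angle_eq_iff hξW hθ
  refine ⟨⟨fun ⟨α, hα⟩ => ?_, fun ⟨θ, hθ, hP2⟩ => ⟨θ, (slant θ hθ).2 hP2⟩⟩,
    fun θ hθ => (slant θ hθ).2⟩
  obtain ⟨θ, hθ, hθα⟩ : ∃ θ ∈ Icc 0 (π / 2), ∀ X ∈ W, (¬ ∃ c : ℝ, X = c • ξ) →
      angle (φ X) (W.tangentialPart φ X) = θ := by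
    by_cases hW : ∃ X ∈ W, ¬ ∃ c : ℝ, X = c • ξ
    · obtain ⟨X, hX, hXξ⟩ := hW
      refine ⟨α, ?_, hα⟩
      rw [← hα X hX hXξ]
      exact ⟨angle_nonneg _ _, W.angle_starProjection_le_pi_div_two _⟩
    · exact ⟨π / 2, ⟨by positivity, le_rfl⟩, fun X hX hXξ => absurd ⟨X, hX, hXξ⟩ hW⟩
  exact ⟨θ, hθ, (slant θ hθ).1 hθα⟩

/-- `W` (a subspace with `ξ ∈ W`) is pointwise slant — i.e. the angle
between `φX` and `W` (= the angle between `φX` and its orthogonal projection `PX`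
onto `W`) is the same for every `X ∈ W` not proportional to `ξ` — if and only if
there is `θ ∈ [0, π/2]` with `P²X = cos²θ • (−X + η(X)ξ)` for all `X ∈ W`;
moreover, any such `θ` equals the common angle between `φX` and `W` for all
`X ∈ W` not proportional to `ξ`. -/
theorem stmt_0 {V : Type*} [NormedAddCommGroup V] [InnerProductSpace ℝ V]
    [FiniteDimensional ℝ V]
    (φ : V →ₗ[ℝ] V) (ξ : V) (η : V → ℝ) (hη : ∀ X, η X = ⟪X, ξ⟫)
    (hξ : ‖ξ‖ = 1) (hφξ : φ ξ = 0)
    (hφ2 : ∀ X : V, φ (φ X) = -X + η X • ξ)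
    (hmetric : ∀ X Y : V, ⟪φ X, φ Y⟫ = ⟪X, Y⟫ - η X * η Y)
    (W : Submodule ℝ V) (hξW : ξ ∈ W)
    (P : V → V) (hP : ∀ X, P X = (W.orthogonalProjectionOnto (φ X) : V)) :
    ((∃ α : ℝ, ∀ X ∈ W, (¬ ∃ c : ℝ, X = c • ξ) →
        InnerProductGeometry.angle (φ X) (P X) = α) ↔
      (∃ θ ∈ Set.Icc (0 : ℝ) (Real.pi / 2),
        ∀ X ∈ W, P (P X) = Real.cos θ ^ 2 • (-X + η X • ξ))) ∧
    (∀ θ ∈ Set.Icc (0 : ℝ) (Real.pi / 2),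
      (∀ X ∈ W, P (P X) = Real.cos θ ^ 2 • (-X + η X • ξ)) →
      ∀ X ∈ W, (¬ ∃ c : ℝ, X = c • ξ) →
        InnerProductGeometry.angle (φ X) (P X) = θ) :=
  stmt_0_general φ ξ η hη hξ hφ2 hmetric W hξW P hP
end

section
/- Let V be a finite-dimensional real inner product space equipped with an almost contact metric structure (φ, ξ, η), and let W ⊆ V be a subspace with ξ ∈ W that is pointwise slant with slant angle θ, i.e., P²X = cos²θ · (−X + η(X)ξ) for all X ∈ W. Then ⟨FX, FY⟩ = sin²θ · (⟨X, Y⟩ − η(X)η(Y)) for all X, Y ∈ W. -/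
/-!
The metric condition forces `φ` to be skew-symmetric, so its compression `P` to `W` is
skew-symmetric on `W`; hence `⟪PX, PY⟫ = -⟪P²X, Y⟫ = cos²θ (⟪X, Y⟫ - η(X)η(Y))`. Since
`φX = PX + FX` splits orthogonally, `⟪FX, FY⟫ = ⟪φX, φY⟫ - ⟪PX, PY⟫ = (1 - cos²θ)(⟪X, Y⟫ - η(X)η(Y))`.
-/

open RealInnerProductSpace

section AlmostContactMetric

variable {V : Type*} [NormedAddCommGroup V] [InnerProductSpace ℝ V]

theorem inner_neg_add_inner_smul_self {ξ : V} (hξ : ‖ξ‖ = 1) (X : V) :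
    ⟪-X + ⟪X, ξ⟫ • ξ, -X + ⟪X, ξ⟫ • ξ⟫ = ⟪X, X⟫ - ⟪X, ξ⟫ * ⟪X, ξ⟫ := by
  simp only [inner_add_left, inner_add_right, inner_neg_left, inner_neg_right, inner_smul_left,
    inner_smul_right, real_inner_self_eq_norm_sq ξ, hξ, real_inner_comm X ξ, conj_trivial]
  ring

variable {φ : V →ₗ[ℝ] V} {ξ : V}

/-- `φ` takes values in `ξ^⊥`: both `‖φ(φX)‖²` and `‖φX‖²` equal `‖X‖² − ⟪X, ξ⟫²`, and the first
also equals `‖φX‖² − ⟪φX, ξ⟫²`. -/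
theorem inner_apply_characteristic_eq_zero (hξ : ‖ξ‖ = 1)
    (hφ2 : ∀ X, φ (φ X) = -X + ⟪X, ξ⟫ • ξ)
    (hmetric : ∀ X Y, ⟪φ X, φ Y⟫ = ⟪X, Y⟫ - ⟪X, ξ⟫ * ⟪Y, ξ⟫) (X : V) :
    ⟪φ X, ξ⟫ = 0 := by
  have h := hmetric (φ X) (φ X)
  rw [hφ2, inner_neg_add_inner_smul_self hξ, ← hmetric] at h
  exact mul_self_eq_zero.mp (by linarith)

theorem inner_apply_left_eq_neg_inner_apply_right (hξ : ‖ξ‖ = 1)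
    (hφ2 : ∀ X, φ (φ X) = -X + ⟪X, ξ⟫ • ξ)
    (hmetric : ∀ X Y, ⟪φ X, φ Y⟫ = ⟪X, Y⟫ - ⟪X, ξ⟫ * ⟪Y, ξ⟫) (X Y : V) :
    ⟪φ X, Y⟫ = -⟪X, φ Y⟫ := by
  have hφξ := inner_apply_characteristic_eq_zero hξ hφ2 hmetric
  have h := hmetric X (φ Y)
  rw [hφ2, hφξ, mul_zero, sub_zero, inner_add_right, inner_neg_right, inner_smul_right,
    hφξ, mul_zero, add_zero] at h
  linarith

end AlmostContactMetric

namespace Submodule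

variable {V : Type*} [NormedAddCommGroup V] [InnerProductSpace ℝ V]
  (K : Submodule ℝ V) [K.HasOrthogonalProjection]

theorem inner_sub_starProjection_sub_starProjection (v w : V) :
    ⟪v - K.starProjection v, w - K.starProjection w⟫
      = ⟪v, w⟫ - ⟪K.starProjection v, K.starProjection w⟫ := by
  have hv : ⟪v - K.starProjection v, K.starProjection w⟫ = 0 :=
    K.starProjection_inner_eq_zero v _ (K.starProjection_apply_mem w)
  rw [inner_sub_right, hv, sub_zero, inner_sub_left,
    ← K.inner_starProjection_left_eq_right (K.starProjection v),
    starProjection_eq_self_iff.mpr (K.starProjection_apply_mem v)]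

theorem inner_starProjection_apply_eq_neg {φ : V →ₗ[ℝ] V}
    (hskew : ∀ X Y, ⟪φ X, Y⟫ = -⟪X, φ Y⟫) {Z Y : V} (hZ : Z ∈ K) (hY : Y ∈ K) :
    ⟪Z, K.starProjection (φ Y)⟫ = -⟪K.starProjection (φ Z), Y⟫ := by
  rw [← inner_starProjection_left_eq_right, starProjection_eq_self_iff.mpr hZ,
    inner_starProjection_left_eq_right, starProjection_eq_self_iff.mpr hY, hskew, neg_neg]

end Submodule

theorem stmt_4_general {V : Type*} [NormedAddCommGroup V] [InnerProductSpace ℝ V]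
    [FiniteDimensional ℝ V]
    (φ : V →ₗ[ℝ] V) (ξ : V) (η : V → ℝ) (hη : ∀ X, η X = ⟪X, ξ⟫)
    (hξ : ‖ξ‖ = 1)
    (hφ2 : ∀ X : V, φ (φ X) = -X + η X • ξ)
    (hmetric : ∀ X Y : V, ⟪φ X, φ Y⟫ = ⟪X, Y⟫ - η X * η Y)
    (W : Submodule ℝ V)
    (P : V → V) (hP : ∀ X, P X = (W.orthogonalProjectionOnto (φ X) : V))
    (F : V → V) (hF : ∀ X, F X = φ X - P X)
    (θ : ℝ)
    (hslant : ∀ X ∈ W, P (P X) = Real.cos θ ^ 2 • (-X + η X • ξ)) :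
    ∀ X ∈ W, ∀ Y ∈ W, ⟪F X, F Y⟫ = Real.sin θ ^ 2 * (⟪X, Y⟫ - η X * η Y) := by
  simp only [hη, hF, hP, Submodule.coe_orthogonalProjectionOnto_apply] at hφ2 hmetric hslant ⊢
  intro X hX Y hY
  have hskew := inner_apply_left_eq_neg_inner_apply_right hξ hφ2 hmetric
  have hPP : ⟪W.starProjection (φ X), W.starProjection (φ Y)⟫
      = Real.cos θ ^ 2 * (⟪X, Y⟫ - ⟪X, ξ⟫ * ⟪Y, ξ⟫) := by
    rw [W.inner_starProjection_apply_eq_neg hskew (W.starProjection_apply_mem _) hY,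
      hslant X hX, real_inner_smul_left, inner_add_left, inner_neg_left, real_inner_smul_left,
      real_inner_comm Y ξ]
    ring
  calc ⟪φ X - W.starProjection (φ X), φ Y - W.starProjection (φ Y)⟫
      = ⟪φ X, φ Y⟫ - ⟪W.starProjection (φ X), W.starProjection (φ Y)⟫ :=
        W.inner_sub_starProjection_sub_starProjection _ _
    _ = (1 - Real.cos θ ^ 2) * (⟪X, Y⟫ - ⟪X, ξ⟫ * ⟪Y, ξ⟫) := by rw [hmetric, hPP]; ring
    _ = Real.sin θ ^ 2 * (⟪X, Y⟫ - ⟪X, ξ⟫ * ⟪Y, ξ⟫) := by rw [Real.sin_sq]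

/-- If `W` (with `ξ ∈ W`) is a pointwise slant subspace with slant angle
`θ` (i.e. `P²X = cos²θ • (−X + η(X)ξ)` on `W`), then
`⟪FX, FY⟫ = sin²θ (⟪X, Y⟫ − η(X)η(Y))` for all `X, Y ∈ W`. -/
theorem stmt_4 {V : Type*} [NormedAddCommGroup V] [InnerProductSpace ℝ V]
    [FiniteDimensional ℝ V]
    (φ : V →ₗ[ℝ] V) (ξ : V) (η : V → ℝ) (hη : ∀ X, η X = ⟪X, ξ⟫)
    (hξ : ‖ξ‖ = 1) (hφξ : φ ξ = 0)
    (hφ2 : ∀ X : V, φ (φ X) = -X + η X • ξ)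
    (hmetric : ∀ X Y : V, ⟪φ X, φ Y⟫ = ⟪X, Y⟫ - η X * η Y)
    (W : Submodule ℝ V) (hξW : ξ ∈ W)
    (P : V → V) (hP : ∀ X, P X = (W.orthogonalProjectionOnto (φ X) : V))
    (F : V → V) (hF : ∀ X, F X = φ X - P X)
    (θ : ℝ) (hθ : θ ∈ Set.Icc 0 (Real.pi / 2))
    (hslant : ∀ X ∈ W, P (P X) = Real.cos θ ^ 2 • (-X + η X • ξ)) :
    ∀ X ∈ W, ∀ Y ∈ W, ⟪F X, F Y⟫ = Real.sin θ ^ 2 * (⟪X, Y⟫ - η X * η Y) :=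
  stmt_4_general φ ξ η hη hξ hφ2 hmetric W P hP F hF θ hslant
end

section
/- Let V be a finite-dimensional real inner product space equipped with an almost contact metric structure (φ, ξ, η), and let W ⊆ V be a subspace with ξ ∈ W that is pointwise slant with slant angle θ, i.e., P²X = cos²θ · (−X + η(X)ξ) for all X ∈ W. Then t(FX) = sin²θ · (−X + η(X)ξ) for all X ∈ W. -/
open RealInnerProductSpace

/- For `X ∈ W` we have `t (F X) = φ (φ X) - P (P X)`: the tangential part of `φ` applied to the
normal part of `φ X` is what remains of the tangent vector `φ² X` after removing `P² X`. Since
`φ² X = -X + η(X) ξ` and `P² X = cos²θ (-X + η(X) ξ)`, the difference is `sin²θ (-X + η(X) ξ)`. -/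

theorem Submodule.starProjection_map_sub_starProjection {𝕜 E : Type*} [RCLike 𝕜]
    [NormedAddCommGroup E] [InnerProductSpace 𝕜 E] (W : Submodule 𝕜 E)
    [W.HasOrthogonalProjection] (φ : E →ₗ[𝕜] E) {X : E} (hX : φ (φ X) ∈ W) :
    W.starProjection (φ (φ X - W.starProjection (φ X))) =
      φ (φ X) - W.starProjection (φ (W.starProjection (φ X))) := by
  rw [map_sub, map_sub, W.starProjection_eq_self_iff.mpr hX]

theorem stmt_5_general {V : Type*} [NormedAddCommGroup V] [InnerProductSpace ℝ V]
    [FiniteDimensional ℝ V]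
    (φ : V →ₗ[ℝ] V) (ξ : V) (η : V → ℝ)
    (hφ2 : ∀ X : V, φ (φ X) = -X + η X • ξ)
    (W : Submodule ℝ V) (hξW : ξ ∈ W)
    (P : V → V) (hP : ∀ X, P X = (Submodule.orthogonalProjectionOnto W (φ X) : V))
    (F : V → V) (hF : ∀ X, F X = φ X - P X)
    (t : V → V) (ht : ∀ N ∈ Wᗮ, t N = (Submodule.orthogonalProjectionOnto W (φ N) : V))
    (θ : ℝ)
    (hslant : ∀ X ∈ W, P (P X) = Real.cos θ ^ 2 • (-X + η X • ξ)) :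
    ∀ X ∈ W, t (F X) = Real.sin θ ^ 2 • (-X + η X • ξ) := by
  intro X hX
  have hφφX : φ (φ X) ∈ W := by
    rw [hφ2]
    exact W.add_mem (W.neg_mem hX) (W.smul_mem _ hξW)
  have hFX : F X ∈ Wᗮ := by
    rw [hF, hP]
    exact W.sub_starProjection_mem_orthogonal (φ X)
  have htF : t (F X) = φ (φ X) - P (P X) := by
    rw [ht _ hFX, hF, hP (P X), hP X]
    exact W.starProjection_map_sub_starProjection φ hφφX
  rw [htF, hslant X hX, hφ2, Real.sin_sq, sub_smul, one_smul]

/-- If `W` (with `ξ ∈ W`) is a pointwise slant subspace with slant angle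
`θ`, then `t(FX) = sin²θ • (−X + η(X)ξ)` for all `X ∈ W`, where for a normal vector
`N ∈ W⊥`, `tN` is the orthogonal projection of `φN` onto `W`. -/
theorem stmt_5 {V : Type*} [NormedAddCommGroup V] [InnerProductSpace ℝ V]
    [FiniteDimensional ℝ V]
    (φ : V →ₗ[ℝ] V) (ξ : V) (η : V → ℝ) (hη : ∀ X, η X = ⟪X, ξ⟫)
    (hξ : ‖ξ‖ = 1) (hφξ : φ ξ = 0)
    (hφ2 : ∀ X : V, φ (φ X) = -X + η X • ξ)
    (hmetric : ∀ X Y : V, ⟪φ X, φ Y⟫ = ⟪X, Y⟫ - η X * η Y)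
    (W : Submodule ℝ V) (hξW : ξ ∈ W)
    (P : V → V) (hP : ∀ X, P X = (Submodule.orthogonalProjectionOnto W (φ X) : V))
    (F : V → V) (hF : ∀ X, F X = φ X - P X)
    (t : V → V) (ht : ∀ N ∈ Wᗮ, t N = (Submodule.orthogonalProjectionOnto W (φ N) : V))
    (f : V → V) (hf : ∀ N ∈ Wᗮ, f N = φ N - t N)
    (θ : ℝ) (hθ : θ ∈ Set.Icc 0 (Real.pi / 2))
    (hslant : ∀ X ∈ W, P (P X) = Real.cos θ ^ 2 • (-X + η X • ξ)) :
    ∀ X ∈ W, t (F X) = Real.sin θ ^ 2 • (-X + η X • ξ) :=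
  stmt_5_general φ ξ η hφ2 W hξW P hP F hF t ht θ hslant
end

section
/- Let V be a finite-dimensional real inner product space equipped with an almost contact metric structure (φ, ξ, η), and let W ⊆ V be a subspace admitting an orthogonal direct sum decomposition W = D ⊕ Dθ ⊕ ℝξ, where D is φ-invariant (φ(D) = D). Then the operator P maps Dθ into Dθ: for every Z ∈ Dθ, the orthogonal projection PZ of φZ onto W lies in Dθ. -/
/-!
Since `φ` maps `D` onto itself and is an isometry on `ξ^⊥`, every vector of `D` is some `φ Y`
with `⟪φ Y, φ Z⟫ = ⟪Y, Z⟫ = 0`, so `φ Z ⊥ D`; and `φ Z ⊥ ξ` because `η ∘ φ = 0`, which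
follows by comparing `‖φ²X‖² = ‖X‖² - η(X)² = ‖φX‖²` with the metric identity for `φX`.
Projecting onto `W ⊇ D + ℝξ` keeps both orthogonality relations, and in the orthogonal sum
`D ⊕ Dθ ⊕ ℝξ` the vectors orthogonal to `D` and to `ξ` are exactly those of `Dθ`.
-/

open RealInnerProductSpace

namespace Submodule

variable {V : Type*} [NormedAddCommGroup V] [InnerProductSpace ℝ V]

theorem sup_inf_orthogonal_eq_of_isOrtho {B C : Submodule ℝ V} (hBC : B ⟂ C) :
    (B ⊔ C) ⊓ Cᗮ = B := by
  rw [sup_inf_assoc_of_le C hBC.le, inf_orthogonal_eq_bot, sup_bot_eq]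

theorem sup_sup_inf_orthogonal_inf_orthogonal_eq {A B C : Submodule ℝ V} (hAB : A ⟂ B)
    (hAC : A ⟂ C) (hBC : B ⟂ C) : (A ⊔ B ⊔ C) ⊓ Cᗮ ⊓ Aᗮ = B := by
  rw [sup_inf_orthogonal_eq_of_isOrtho (isOrtho_sup_left.2 ⟨hAC, hBC⟩), sup_comm,
    sup_inf_orthogonal_eq_of_isOrtho hAB.symm]

theorem isOrtho_span_singleton_of_inner_eq_zero {K : Submodule ℝ V} {ξ : V}
    (hK : ∀ X ∈ K, ⟪X, ξ⟫ = 0) : K ⟂ ℝ ∙ ξ :=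
  isOrtho_iff_le.2 fun X hX => mem_orthogonal_singleton_iff_inner_left.2 (hK X hX)

theorem starProjection_mem_orthogonal {K W : Submodule ℝ V} [W.HasOrthogonalProjection]
    (hKW : K ≤ W) {u : V} (hu : u ∈ Kᗮ) : W.starProjection u ∈ Kᗮ := by
  intro k hk
  rw [← inner_starProjection_left_eq_right, starProjection_eq_self_iff.2 (hKW hk)]
  exact hu k hk

end Submodule

section AlmostContactMetric

variable {V : Type*} [NormedAddCommGroup V] [InnerProductSpace ℝ V]
  {φ : V →ₗ[ℝ] V} {ξ : V}

theorem inner_apply_reeb_eq_zero (hξ : ‖ξ‖ = 1)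
    (hφ2 : ∀ X, φ (φ X) = -X + ⟪X, ξ⟫ • ξ)
    (hmetric : ∀ X, ⟪φ X, φ X⟫ = ⟪X, X⟫ - ⟪X, ξ⟫ * ⟪X, ξ⟫) (X : V) : ⟪φ X, ξ⟫ = 0 := by
  have hξξ : ⟪ξ, ξ⟫ = 1 := by rw [real_inner_self_eq_norm_sq, hξ, one_pow]
  have hφφ : ⟪φ (φ X), φ (φ X)⟫ = ⟪φ X, φ X⟫ := by
    rw [hφ2, hmetric]
    simp only [inner_add_add_self, inner_neg_left, inner_neg_right, real_inner_smul_left,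
      real_inner_smul_right, real_inner_comm ξ X, hξξ]
    ring
  rw [hmetric (φ X)] at hφφ
  exact mul_self_eq_zero.mp (by linarith)

theorem apply_mem_orthogonal_of_le_map {D : Submodule ℝ V} (hD : D ≤ D.map φ)
    (hmetric : ∀ X Y, ⟪φ X, φ Y⟫ = ⟪X, Y⟫ - ⟪X, ξ⟫ * ⟪Y, ξ⟫) {Z : V} (hZ : Z ∈ Dᗮ)
    (hZξ : ⟪Z, ξ⟫ = 0) : φ Z ∈ Dᗮ := by
  intro X hX
  obtain ⟨Y, hY, rfl⟩ := hD hX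
  rw [hmetric, hZξ, mul_zero, sub_zero]
  exact hZ Y hY

end AlmostContactMetric

theorem stmt_7_general {V : Type*} [NormedAddCommGroup V] [InnerProductSpace ℝ V]
    [FiniteDimensional ℝ V]
    (φ : V →ₗ[ℝ] V) (ξ : V) (η : V → ℝ) (hη : ∀ X, η X = ⟪X, ξ⟫)
    (hξ : ‖ξ‖ = 1)
    (hφ2 : ∀ X : V, φ (φ X) = -X + η X • ξ)
    (hmetric : ∀ X Y : V, ⟪φ X, φ Y⟫ = ⟪X, Y⟫ - η X * η Y)
    (W D Dθ : Submodule ℝ V)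
    (hdecomp : W = D ⊔ Dθ ⊔ (ℝ ∙ ξ))
    (hDDθ : ∀ X ∈ D, ∀ Z ∈ Dθ, ⟪X, Z⟫ = 0)
    (hDξ : ∀ X ∈ D, ⟪X, ξ⟫ = 0)
    (hDθξ : ∀ Z ∈ Dθ, ⟪Z, ξ⟫ = 0)
    (hinv : D.map φ = D)
    (P : V → V) (hP : ∀ X, P X = (W.orthogonalProjection (φ X) : V)) :
    ∀ Z ∈ Dθ, P Z ∈ Dθ := by
  obtain rfl : η = (⟪·, ξ⟫) := funext hη
  intro Z hZ
  have hDW : D ≤ W := hdecomp ▸ le_sup_left.trans le_sup_left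
  have hξW : ℝ ∙ ξ ≤ W := hdecomp ▸ le_sup_right
  have hφZD : φ Z ∈ Dᗮ := apply_mem_orthogonal_of_le_map hinv.ge hmetric
    (fun X hX => hDDθ X hX Z hZ) (hDθξ Z hZ)
  have hφZξ : φ Z ∈ (ℝ ∙ ξ)ᗮ := Submodule.mem_orthogonal_singleton_iff_inner_left.2 <|
    inner_apply_reeb_eq_zero hξ hφ2 (fun X => hmetric X X) Z
  rw [← Submodule.sup_sup_inf_orthogonal_inf_orthogonal_eq
    (Submodule.isOrtho_iff_inner_eq.2 hDDθ) (Submodule.isOrtho_span_singleton_of_inner_eq_zero hDξ)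
    (Submodule.isOrtho_span_singleton_of_inner_eq_zero hDθξ), ← hdecomp, hP,
    Submodule.coe_orthogonalProjectionOnto_apply]
  exact ⟨⟨W.starProjection_apply_mem _, Submodule.starProjection_mem_orthogonal hξW hφZξ⟩,
    Submodule.starProjection_mem_orthogonal hDW hφZD⟩

/-- If `W` admits an orthogonal direct sum decomposition
`W = D ⊕ Dθ ⊕ ℝξ` with `D` invariant under `φ` (`φ(D) = D`), then the tangential
operator `P` maps `Dθ` into `Dθ`: for every `Z ∈ Dθ`, the orthogonal projection
`PZ` of `φZ` onto `W` lies in `Dθ`. -/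
theorem stmt_7 {V : Type*} [NormedAddCommGroup V] [InnerProductSpace ℝ V]
    [FiniteDimensional ℝ V]
    (φ : V →ₗ[ℝ] V) (ξ : V) (η : V → ℝ) (hη : ∀ X, η X = ⟪X, ξ⟫)
    (hξ : ‖ξ‖ = 1) (hφξ : φ ξ = 0)
    (hφ2 : ∀ X : V, φ (φ X) = -X + η X • ξ)
    (hmetric : ∀ X Y : V, ⟪φ X, φ Y⟫ = ⟪X, Y⟫ - η X * η Y)
    (W D Dθ : Submodule ℝ V)
    (hdecomp : W = D ⊔ Dθ ⊔ (ℝ ∙ ξ))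
    (hDDθ : ∀ X ∈ D, ∀ Z ∈ Dθ, ⟪X, Z⟫ = 0)
    (hDξ : ∀ X ∈ D, ⟪X, ξ⟫ = 0)
    (hDθξ : ∀ Z ∈ Dθ, ⟪Z, ξ⟫ = 0)
    (hinv : D.map φ = D)
    (P : V → V) (hP : ∀ X, P X = (W.orthogonalProjection (φ X) : V)) :
    ∀ Z ∈ Dθ, P Z ∈ Dθ :=
  stmt_7_general φ ξ η hη hξ hφ2 hmetric W D Dθ hdecomp hDDθ hDξ hDθξ hinv P hP
end

section
/- Let V be a finite-dimensional real inner product space equipped with an almost contact metric structure (φ, ξ, η), and let W ⊆ V be a subspace admitting an orthogonal direct sum decomposition W = D ⊕ Dθ ⊕ ℝξ, where D is φ-invariant (φ(D) = D). Let F(Dθ) = {FZ : Z ∈ Dθ} ⊆ W⊥ and let ν be the orthogonal complement of F(Dθ) inside W⊥. Then ν is φ-invariant: φ(ν) ⊆ ν. Consequently W⊥ decomposes orthogonally as W⊥ = F(Dθ) ⊕ ν with ν invariant under φ. -/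
open RealInnerProductSpace

/-!
Write `G = W ⊔ F(W)`. Since `φ X = P X + F X` and `φ (F X) = φ² X - φ (P X)` with
`φ² X = -X + η X ξ ∈ W`, the space `G` is `φ`-invariant. The axioms make `φ` skew-adjoint,
so `Gᗮ = Wᗮ ⊓ F(W)ᗮ` is `φ`-invariant as well. Finally `F(W) = F(Dθ)`, because `F` vanishes on
the `φ`-invariant part `D` and on `ξ`, so `Gᗮ = ν`.
-/

section

variable {V : Type*} [NormedAddCommGroup V] [InnerProductSpace ℝ V]

noncomputable def normalPart (W : Submodule ℝ V) [W.HasOrthogonalProjection] (φ : V →ₗ[ℝ] V) :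
    V →ₗ[ℝ] V :=
  φ - W.starProjection.toLinearMap ∘ₗ φ

section normalPart

variable (W : Submodule ℝ V) [W.HasOrthogonalProjection] (φ : V →ₗ[ℝ] V)

lemma normalPart_apply (X : V) : normalPart W φ X = φ X - W.starProjection (φ X) := rfl

lemma map_normalPart_le_orthogonal (K : Submodule ℝ V) : K.map (normalPart W φ) ≤ Wᗮ := by
  rintro _ ⟨X, -, rfl⟩
  exact W.sub_starProjection_mem_orthogonal (φ X)

variable {W φ} in
lemma map_normalPart_eq_bot {K : Submodule ℝ V} (hK : K.map φ ≤ W) :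
    K.map (normalPart W φ) = ⊥ := by
  refine Submodule.eq_bot_iff _ |>.2 ?_
  rintro _ ⟨X, hX, rfl⟩
  rw [normalPart_apply, W.starProjection_eq_self_iff.2 (hK ⟨X, hX, rfl⟩), sub_self]

lemma map_le_sup_map_normalPart : W.map φ ≤ W ⊔ W.map (normalPart W φ) := by
  rintro _ ⟨X, hX, rfl⟩
  have hsplit : φ X = W.starProjection (φ X) + normalPart W φ X := by
    rw [normalPart_apply, add_sub_cancel]
  rw [hsplit]
  exact Submodule.add_mem_sup (W.starProjection_apply_mem _) ⟨X, hX, rfl⟩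

variable {W φ} in
lemma map_sup_map_normalPart_le (hφφ : ∀ X ∈ W, φ (φ X) ∈ W) :
    (W ⊔ W.map (normalPart W φ)).map φ ≤ W ⊔ W.map (normalPart W φ) := by
  rw [Submodule.map_sup]
  refine sup_le (map_le_sup_map_normalPart W φ) ?_
  rintro _ ⟨_, ⟨X, hX, rfl⟩, rfl⟩
  rw [normalPart_apply, map_sub]
  exact Submodule.sub_mem _ (Submodule.mem_sup_left (hφφ X hX))
    (map_le_sup_map_normalPart W φ ⟨_, W.starProjection_apply_mem _, rfl⟩)

end normalPart

lemma map_orthogonal_le_of_map_le {φ : V →ₗ[ℝ] V} (hskew : ∀ X Y, ⟪φ X, Y⟫ = -⟪X, φ Y⟫)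
    {K : Submodule ℝ V} (hK : K.map φ ≤ K) : Kᗮ.map φ ≤ Kᗮ := by
  rintro _ ⟨N, hN, rfl⟩ X hX
  rw [real_inner_comm, hskew, real_inner_comm, hN _ (hK ⟨X, hX, rfl⟩), neg_zero]

section AlmostContact

variable {φ : V →ₗ[ℝ] V} {ξ : V}

lemma inner_map_apply_xi (hφξ : φ ξ = 0) (hφ2 : ∀ X, φ (φ X) = -X + ⟪X, ξ⟫ • ξ) (X : V) :
    ⟪φ X, ξ⟫ = 0 := by
  have hφ3 : φ (φ (φ X)) = -φ X := by
    rw [hφ2 X, map_add, map_neg, map_smul, hφξ, smul_zero, add_zero]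
  have h := hφ2 (φ X)
  rw [hφ3, left_eq_add, smul_eq_zero] at h
  rcases h with h | rfl
  · exact h
  · exact inner_zero_right _

lemma inner_map_left_eq_neg (hφξ : φ ξ = 0) (hφ2 : ∀ X, φ (φ X) = -X + ⟪X, ξ⟫ • ξ)
    (hmetric : ∀ X Y, ⟪φ X, φ Y⟫ = ⟪X, Y⟫ - ⟪X, ξ⟫ * ⟪Y, ξ⟫) (X Y : V) :
    ⟪φ X, Y⟫ = -⟪X, φ Y⟫ := by
  have h := hmetric X (φ Y)
  rw [inner_map_apply_xi hφξ hφ2, mul_zero, sub_zero, hφ2, inner_add_right, inner_neg_right,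
    real_inner_smul_right, inner_map_apply_xi hφξ hφ2, mul_zero, add_zero] at h
  linarith

end AlmostContact

end

theorem stmt_8_general {V : Type*} [NormedAddCommGroup V] [InnerProductSpace ℝ V]
    [FiniteDimensional ℝ V]
    (φ : V →ₗ[ℝ] V) (ξ : V) (η : V → ℝ) (hη : ∀ X, η X = ⟪X, ξ⟫)
    (hφξ : φ ξ = 0)
    (hφ2 : ∀ X : V, φ (φ X) = -X + η X • ξ)
    (hmetric : ∀ X Y : V, ⟪φ X, φ Y⟫ = ⟪X, Y⟫ - η X * η Y)
    (W D Dθ : Submodule ℝ V)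
    (hdecomp : W = D ⊔ Dθ ⊔ (ℝ ∙ ξ))
    (hinv : D.map φ = D)
    (P : V → V) (hP : ∀ X, P X = (W.orthogonalProjection (φ X) : V))
    (F : V → V) (hF : ∀ X, F X = φ X - P X)
    (FDθ : Submodule ℝ V) (hFDθ : (FDθ : Set V) = F '' (Dθ : Set V))
    (ν : Submodule ℝ V) (hν : ν = Wᗮ ⊓ FDθᗮ) :
    (∀ N ∈ ν, φ N ∈ ν) ∧ FDθ ≤ Wᗮ ∧ FDθ ⊔ ν = Wᗮ := by
  obtain rfl : η = fun X => ⟪X, ξ⟫ := funext hη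
  have hDW : D ≤ W := hdecomp ▸ le_sup_left.trans le_sup_left
  have hξW : ξ ∈ W := hdecomp ▸ Submodule.mem_sup_right (Submodule.mem_span_singleton_self ξ)
  have hFDθW : FDθ = W.map (normalPart W φ) := by
    have hF' : F = normalPart W φ := funext fun X => by rw [hF, hP]; rfl
    have hspan : (ℝ ∙ ξ).map φ ≤ W := by
      rw [Submodule.map_le_iff_le_comap, Submodule.span_singleton_le_iff_mem]
      simp [hφξ]
    calc FDθ = Dθ.map (normalPart W φ) := SetLike.coe_injective (by rw [hFDθ, hF']; rfl)
      _ = (D ⊔ Dθ ⊔ (ℝ ∙ ξ)).map (normalPart W φ) := by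
        rw [Submodule.map_sup, Submodule.map_sup, map_normalPart_eq_bot (hinv.le.trans hDW),
          map_normalPart_eq_bot hspan, bot_sup_eq, sup_bot_eq]
      _ = W.map (normalPart W φ) := by rw [← hdecomp]
  have hFDθ_le : FDθ ≤ Wᗮ := hFDθW ▸ map_normalPart_le_orthogonal W φ W
  have hinvG : (W ⊔ FDθ).map φ ≤ W ⊔ FDθ := hFDθW ▸ map_sup_map_normalPart_le fun X hX =>
    hφ2 X ▸ W.add_mem (W.neg_mem hX) (W.smul_mem _ hξW)
  have hνG : ν = (W ⊔ FDθ)ᗮ := hν.trans (Submodule.inf_orthogonal W FDθ)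
  refine ⟨fun N hN => ?_, hFDθ_le, ?_⟩
  · rw [hνG] at hN ⊢
    exact map_orthogonal_le_of_map_le (inner_map_left_eq_neg hφξ hφ2 hmetric) hinvG
      ⟨N, hN, rfl⟩
  · rw [hν, inf_comm]
    exact Submodule.sup_orthogonal_inf_of_hasOrthogonalProjection hFDθ_le

/-- If `W` admits an orthogonal direct sum decomposition
`W = D ⊕ Dθ ⊕ ℝξ` with `D` invariant under `φ`, let `FDθ = {FZ : Z ∈ Dθ} ⊆ W⊥`
and let `ν` be the orthogonal complement of `FDθ` inside `W⊥`. Then `ν` is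
`φ`-invariant, and `W⊥` decomposes orthogonally as `W⊥ = FDθ ⊕ ν`. -/
theorem stmt_8 {V : Type*} [NormedAddCommGroup V] [InnerProductSpace ℝ V]
    [FiniteDimensional ℝ V]
    (φ : V →ₗ[ℝ] V) (ξ : V) (η : V → ℝ) (hη : ∀ X, η X = ⟪X, ξ⟫)
    (hξ : ‖ξ‖ = 1) (hφξ : φ ξ = 0)
    (hφ2 : ∀ X : V, φ (φ X) = -X + η X • ξ)
    (hmetric : ∀ X Y : V, ⟪φ X, φ Y⟫ = ⟪X, Y⟫ - η X * η Y)
    (W D Dθ : Submodule ℝ V)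
    (hdecomp : W = D ⊔ Dθ ⊔ (ℝ ∙ ξ))
    (hDDθ : ∀ X ∈ D, ∀ Z ∈ Dθ, ⟪X, Z⟫ = 0)
    (hDξ : ∀ X ∈ D, ⟪X, ξ⟫ = 0)
    (hDθξ : ∀ Z ∈ Dθ, ⟪Z, ξ⟫ = 0)
    (hinv : D.map φ = D)
    (P : V → V) (hP : ∀ X, P X = (W.orthogonalProjection (φ X) : V))
    (F : V → V) (hF : ∀ X, F X = φ X - P X)
    (FDθ : Submodule ℝ V) (hFDθ : (FDθ : Set V) = F '' (Dθ : Set V))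
    (ν : Submodule ℝ V) (hν : ν = Wᗮ ⊓ FDθᗮ) :
    (∀ N ∈ ν, φ N ∈ ν) ∧ FDθ ≤ Wᗮ ∧ FDθ ⊔ ν = Wᗮ :=
  stmt_8_general φ ξ η hη hφξ hφ2 hmetric W D Dθ hdecomp hinv P hP F hF FDθ hFDθ ν hν
end

section
/- In ℝ⁷ with the structure (φ, ξ) described below, fix real parameters w, t and set Z₁ = e₁ − e₂, Z₂ = e₁ + e₂, Z₃ = −t·sin w·e₃ + t·cos w·e₄ + cos t·e₅ + sin t·e₆, Z₄ = cos w·e₃ + sin w·e₄ − w·sin t·e₅ + w·cos t·e₆, and T = span{Z₁, Z₂, Z₃, Z₄, e₇}. Then for every nonzero X ∈ span{Z₃, Z₄}, writing PX for the orthogonal projection of φX onto T, one has ‖PX‖² · (t² + 1)(w² + 1) = (t − w)² · ‖φX‖². Hence the cosine of the angle between φX and T equals |t − w| / √((t² + 1)(w² + 1)), independently of the choice of nonzero X ∈ span{Z₃, Z₄}; i.e., span{Z₃, Z₄} is pointwise slant with slant function θ = arccos(|t − w| / √((t² + 1)(w² + 1))). -/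
/-!
`Z₃ ⊥ Z₄` with `‖Z₃‖² = t² + 1` and `‖Z₄‖² = w² + 1`. For `X = aZ₃ + bZ₄` the vector `φX` has the
norm of `X`, is orthogonal to `Z₁, Z₂, ξ`, and `⟪φX, Z₃⟫ = b(w − t)`, `⟪φX, Z₄⟫ = a(t − w)`. So its
projection onto `T` is `b(w − t)/(t² + 1)·Z₃ + a(t − w)/(w² + 1)·Z₄`, of squared norm
`(t − w)²(a²(t² + 1) + b²(w² + 1))/((t² + 1)(w² + 1)) = (t − w)²‖φX‖²/((t² + 1)(w² + 1))`.
Finally, `⟪x, Px⟫ = ‖Px‖²` for an orthogonal projection `P`, so the cosine of the angle between `x`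
and `Px` is `‖Px‖/‖x‖`.
-/

open Real
open scoped InnerProductSpace

section General

variable {𝕜 E F : Type*} [RCLike 𝕜] [NormedAddCommGroup E] [InnerProductSpace 𝕜 E]
  [NormedAddCommGroup F] [InnerProductSpace ℝ F]

theorem Submodule.eq_starProjection_span_of_mem_of_inner_eq_zero {s : Set E}
    [(span 𝕜 s).HasOrthogonalProjection] {y p : E} (hp : p ∈ span 𝕜 s)
    (h : ∀ u ∈ s, ⟪y - p, u⟫_𝕜 = 0) : (span 𝕜 s).starProjection y = p := by
  refine eq_starProjection_of_mem_orthogonal hp ?_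
  rw [← span_singleton_le_iff_mem, ← isOrtho_iff_le, isOrtho_span]
  simpa using h

theorem Submodule.real_inner_starProjection_eq_norm_sq (K : Submodule ℝ F)
    [K.HasOrthogonalProjection] (x : F) : ⟪x, K.starProjection x⟫_ℝ = ‖K.starProjection x‖ ^ 2 := by
  have h := K.starProjection_inner_eq_zero x _ (K.starProjection_apply_mem x)
  rwa [inner_sub_left, sub_eq_zero, real_inner_self_eq_norm_sq] at h

theorem InnerProductGeometry.angle_self_starProjection (K : Submodule ℝ F)
    [K.HasOrthogonalProjection] (x : F) :
    angle x (K.starProjection x) = arccos (‖K.starProjection x‖ / ‖x‖) := by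
  rw [angle, K.real_inner_starProjection_eq_norm_sq]
  rcases eq_or_ne ‖K.starProjection x‖ 0 with h | h
  · simp [h]
  · congr 1
    field_simp

theorem norm_smul_add_smul_sq_of_inner_eq_zero {u v : F} (h : ⟪u, v⟫_ℝ = 0) (a b : ℝ) :
    ‖a • u + b • v‖ ^ 2 = a ^ 2 * ‖u‖ ^ 2 + b ^ 2 * ‖v‖ ^ 2 := by
  rw [norm_add_sq_real, real_inner_smul_left, real_inner_smul_right, h, norm_smul, norm_smul,
    mul_pow, mul_pow, Real.norm_eq_abs, Real.norm_eq_abs, sq_abs, sq_abs]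
  ring

end General

theorem div_eq_abs_div_sqrt_of_sq_mul_eq {a b c k : ℝ} (ha : 0 ≤ a) (hb : 0 < b) (hc : 0 < c)
    (h : a ^ 2 * c = k ^ 2 * b ^ 2) : a / b = |k| / √c := by
  rw [div_eq_div_iff hb.ne' (sqrt_pos.mpr hc).ne']
  refine (sq_eq_sq₀ (by positivity) (by positivity)).mp ?_
  rw [mul_pow, mul_pow, sq_sqrt hc.le, sq_abs, h]

noncomputable section

namespace SlantExample

open EuclideanSpace

variable (t w : ℝ)

def Z₃ : EuclideanSpace ℝ (Fin 7) :=
  (-(t * sin w)) • single 2 1 + (t * cos w) • single 3 1 + cos t • single 4 1 + sin t • single 5 1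

def Z₄ : EuclideanSpace ℝ (Fin 7) :=
  cos w • single 2 1 + sin w • single 3 1 + (-(w * sin t)) • single 4 1 + (w * cos t) • single 5 1

def φZ₃ : EuclideanSpace ℝ (Fin 7) :=
  (t * cos w) • single 2 1 + (t * sin w) • single 3 1 + sin t • single 4 1 + (-cos t) • single 5 1

def φZ₄ : EuclideanSpace ℝ (Fin 7) :=
  sin w • single 2 1 + (-cos w) • single 3 1 + (w * cos t) • single 4 1 + (w * sin t) • single 5 1

def T : Submodule ℝ (EuclideanSpace ℝ (Fin 7)) :=
  Submodule.span ℝ {single 0 1 - single 1 1, single 0 1 + single 1 1, Z₃ t w, Z₄ t w, single 6 1}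

theorem norm_Z₃_sq : ‖Z₃ t w‖ ^ 2 = t ^ 2 + 1 := by
  simp [Z₃, EuclideanSpace.norm_sq_eq, Fin.sum_univ_succ, PiLp.single_apply]
  linear_combination t ^ 2 * Real.sin_sq_add_cos_sq w

theorem norm_Z₄_sq : ‖Z₄ t w‖ ^ 2 = w ^ 2 + 1 := by
  simp [Z₄, EuclideanSpace.norm_sq_eq, Fin.sum_univ_succ, PiLp.single_apply]
  linear_combination w ^ 2 * Real.sin_sq_add_cos_sq t + Real.sin_sq_add_cos_sq w

theorem inner_Z₃_Z₄ : ⟪Z₃ t w, Z₄ t w⟫_ℝ = 0 := by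
  simp [Z₃, Z₄, inner_eq_star_dotProduct, dotProduct, Fin.sum_univ_succ, PiLp.single_apply]
  ring

variable (a b : ℝ)

theorem inner_smul_φZ₃_add_smul_φZ₄_Z₃ : ⟪a • φZ₃ t w + b • φZ₄ t w, Z₃ t w⟫_ℝ = b * (w - t) := by
  simp [Z₃, φZ₃, φZ₄, inner_eq_star_dotProduct, dotProduct, Fin.sum_univ_succ, PiLp.single_apply]
  linear_combination b * w * Real.sin_sq_add_cos_sq t - b * t * Real.sin_sq_add_cos_sq w

theorem inner_smul_φZ₃_add_smul_φZ₄_Z₄ : ⟪a • φZ₃ t w + b • φZ₄ t w, Z₄ t w⟫_ℝ = a * (t - w) := by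
  simp [Z₄, φZ₃, φZ₄, inner_eq_star_dotProduct, dotProduct, Fin.sum_univ_succ, PiLp.single_apply]
  linear_combination a * t * Real.sin_sq_add_cos_sq w - a * w * Real.sin_sq_add_cos_sq t

theorem norm_smul_φZ₃_add_smul_φZ₄ : ‖a • φZ₃ t w + b • φZ₄ t w‖ = ‖a • Z₃ t w + b • Z₄ t w‖ := by
  simp [Z₃, Z₄, φZ₃, φZ₄, EuclideanSpace.norm_eq, Fin.sum_univ_succ, PiLp.single_apply]
  ring_nf

theorem map_smul_Z₃_add_smul_Z₄ (φ : EuclideanSpace ℝ (Fin 7) →ₗ[ℝ] EuclideanSpace ℝ (Fin 7))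
    (h3 : φ (single 2 1) = -single 3 1) (h4 : φ (single 3 1) = single 2 1)
    (h5 : φ (single 4 1) = -single 5 1) (h6 : φ (single 5 1) = single 4 1) :
    φ (a • Z₃ t w + b • Z₄ t w) = a • φZ₃ t w + b • φZ₄ t w := by
  simp only [Z₃, Z₄, φZ₃, φZ₄, map_add, map_smul, h3, h4, h5, h6]
  module

theorem starProjection_T_smul_φZ₃_add_smul_φZ₄ :
    (T t w).starProjection (a • φZ₃ t w + b • φZ₄ t w) =
      (b * (w - t) / (t ^ 2 + 1)) • Z₃ t w + (a * (t - w) / (w ^ 2 + 1)) • Z₄ t w := by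
  apply Submodule.eq_starProjection_span_of_mem_of_inner_eq_zero
  · exact add_mem (Submodule.smul_mem _ _ (Submodule.subset_span (by simp)))
      (Submodule.smul_mem _ _ (Submodule.subset_span (by simp)))
  simp only [Set.mem_insert_iff, Set.mem_singleton_iff, forall_eq_or_imp, forall_eq]
  refine ⟨?_, ?_, ?_, ?_, ?_⟩
  rotate_left 2
  · rw [inner_sub_left, inner_smul_φZ₃_add_smul_φZ₄_Z₃, inner_add_left, real_inner_smul_left,
      real_inner_smul_left, real_inner_self_eq_norm_sq, norm_Z₃_sq, real_inner_comm, inner_Z₃_Z₄]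
    field_simp
    ring
  · rw [inner_sub_left, inner_smul_φZ₃_add_smul_φZ₄_Z₄, inner_add_left, real_inner_smul_left,
      real_inner_smul_left, real_inner_self_eq_norm_sq, norm_Z₄_sq, inner_Z₃_Z₄]
    field_simp
    ring
  -- `Z₁`, `Z₂` and `e 6` live on the coordinates `0, 1, 6`, where `Z₃, Z₄, φZ₃, φZ₄` vanish.
  all_goals
    simp [Z₃, Z₄, φZ₃, φZ₄, inner_eq_star_dotProduct, dotProduct, Fin.sum_univ_succ,
      PiLp.single_apply]

theorem norm_starProjection_T_sq_mul :
    ‖(T t w).starProjection (a • φZ₃ t w + b • φZ₄ t w)‖ ^ 2 * ((t ^ 2 + 1) * (w ^ 2 + 1)) =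
      (t - w) ^ 2 * ‖a • φZ₃ t w + b • φZ₄ t w‖ ^ 2 := by
  rw [starProjection_T_smul_φZ₃_add_smul_φZ₄, norm_smul_φZ₃_add_smul_φZ₄,
    norm_smul_add_smul_sq_of_inner_eq_zero (inner_Z₃_Z₄ t w),
    norm_smul_add_smul_sq_of_inner_eq_zero (inner_Z₃_Z₄ t w), norm_Z₃_sq, norm_Z₄_sq]
  field_simp
  ring

end SlantExample

end

theorem stmt_10_general (w t : ℝ)
    (e : Fin 7 → EuclideanSpace ℝ (Fin 7))
    (he : ∀ i, e i = EuclideanSpace.single i 1)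
    (φ : EuclideanSpace ℝ (Fin 7) →ₗ[ℝ] EuclideanSpace ℝ (Fin 7))
    (h3 : φ (e 2) = -e 3) (h4 : φ (e 3) = e 2)
    (h5 : φ (e 4) = -e 5) (h6 : φ (e 5) = e 4)
    (Z₁ Z₂ Z₃ Z₄ : EuclideanSpace ℝ (Fin 7))
    (hZ₁ : Z₁ = e 0 - e 1) (hZ₂ : Z₂ = e 0 + e 1)
    (hZ₃ : Z₃ = (-(t * Real.sin w)) • e 2 + (t * Real.cos w) • e 3 +
      Real.cos t • e 4 + Real.sin t • e 5)
    (hZ₄ : Z₄ = Real.cos w • e 2 + Real.sin w • e 3 +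
      (-(w * Real.sin t)) • e 4 + (w * Real.cos t) • e 5)
    (T : Submodule ℝ (EuclideanSpace ℝ (Fin 7)))
    (hT : T = Submodule.span ℝ {Z₁, Z₂, Z₃, Z₄, e 6}) :
    ∀ X ∈ Submodule.span ℝ {Z₃, Z₄}, X ≠ 0 →
      ‖(Submodule.orthogonalProjection T (φ X) : EuclideanSpace ℝ (Fin 7))‖ ^ 2 *
          ((t ^ 2 + 1) * (w ^ 2 + 1)) = (t - w) ^ 2 * ‖φ X‖ ^ 2 ∧
      InnerProductGeometry.angle (φ X)
          ((Submodule.orthogonalProjection T (φ X) : EuclideanSpace ℝ (Fin 7))) =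
        Real.arccos (|t - w| / Real.sqrt ((t ^ 2 + 1) * (w ^ 2 + 1))) := by
  intro X hX hX0
  obtain rfl : e = fun i => EuclideanSpace.single i 1 := funext he
  obtain rfl : Z₃ = SlantExample.Z₃ t w := hZ₃
  obtain rfl : Z₄ = SlantExample.Z₄ t w := hZ₄
  obtain rfl : T = SlantExample.T t w := by rw [hT, hZ₁, hZ₂]; rfl
  obtain ⟨a, b, rfl⟩ := Submodule.mem_span_pair.mp hX
  rw [SlantExample.map_smul_Z₃_add_smul_Z₄ t w a b φ h3 h4 h5 h6, ← Submodule.starProjection_apply]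
  have hφX : 0 < ‖a • SlantExample.φZ₃ t w + b • SlantExample.φZ₄ t w‖ := by
    rw [SlantExample.norm_smul_φZ₃_add_smul_φZ₄]
    exact norm_pos_iff.mpr hX0
  have key := SlantExample.norm_starProjection_T_sq_mul t w a b
  refine ⟨key, ?_⟩
  rw [InnerProductGeometry.angle_self_starProjection,
    div_eq_abs_div_sqrt_of_sq_mul_eq (norm_nonneg _) hφX (by positivity) key]

/-- In `ℝ⁷` with the contact structure `φ` (and `ξ = e₇`), for real
parameters `w, t`, with `Z₁ = e₁ − e₂`, `Z₂ = e₁ + e₂`,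
`Z₃ = −t sin w·e₃ + t cos w·e₄ + cos t·e₅ + sin t·e₆`,
`Z₄ = cos w·e₃ + sin w·e₄ − w sin t·e₅ + w cos t·e₆`, and
`T = span{Z₁, Z₂, Z₃, Z₄, e₇}`: for every nonzero `X ∈ span{Z₃, Z₄}`, writing `PX`
for the orthogonal projection of `φX` onto `T`, one has
`‖PX‖²(t² + 1)(w² + 1) = (t − w)²‖φX‖²`, and the angle between `φX` and `T`
(i.e. the angle between `φX` and `PX`) equals
`arccos(|t − w| / √((t² + 1)(w² + 1)))`, independently of `X`. -/
theorem stmt_10 (w t : ℝ)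
    (e : Fin 7 → EuclideanSpace ℝ (Fin 7))
    (he : ∀ i, e i = EuclideanSpace.single i 1)
    (φ : EuclideanSpace ℝ (Fin 7) →ₗ[ℝ] EuclideanSpace ℝ (Fin 7))
    (h1 : φ (e 0) = -e 1) (h2 : φ (e 1) = e 0)
    (h3 : φ (e 2) = -e 3) (h4 : φ (e 3) = e 2)
    (h5 : φ (e 4) = -e 5) (h6 : φ (e 5) = e 4)
    (h7 : φ (e 6) = 0) (ξ : EuclideanSpace ℝ (Fin 7)) (hξ : ξ = e 6)
    (Z₁ Z₂ Z₃ Z₄ : EuclideanSpace ℝ (Fin 7))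
    (hZ₁ : Z₁ = e 0 - e 1) (hZ₂ : Z₂ = e 0 + e 1)
    (hZ₃ : Z₃ = (-(t * Real.sin w)) • e 2 + (t * Real.cos w) • e 3 +
      Real.cos t • e 4 + Real.sin t • e 5)
    (hZ₄ : Z₄ = Real.cos w • e 2 + Real.sin w • e 3 +
      (-(w * Real.sin t)) • e 4 + (w * Real.cos t) • e 5)
    (T : Submodule ℝ (EuclideanSpace ℝ (Fin 7)))
    (hT : T = Submodule.span ℝ {Z₁, Z₂, Z₃, Z₄, e 6}) :
    ∀ X ∈ Submodule.span ℝ {Z₃, Z₄}, X ≠ 0 →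
      ‖(Submodule.orthogonalProjection T (φ X) : EuclideanSpace ℝ (Fin 7))‖ ^ 2 *
          ((t ^ 2 + 1) * (w ^ 2 + 1)) = (t - w) ^ 2 * ‖φ X‖ ^ 2 ∧
      InnerProductGeometry.angle (φ X)
          ((Submodule.orthogonalProjection T (φ X) : EuclideanSpace ℝ (Fin 7))) =
        Real.arccos (|t - w| / Real.sqrt ((t ^ 2 + 1) * (w ^ 2 + 1))) :=
  stmt_10_general w t e he φ h3 h4 h5 h6 Z₁ Z₂ Z₃ Z₄ hZ₁ hZ₂ hZ₃ hZ₄ T hT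
end

section
/- In ℝ⁷ with the structure (φ, ξ) described below, fix real parameters w, t and set Z₁ = e₁ − e₂, Z₂ = e₁ + e₂, Z₃ = −t·sin w·e₃ + t·cos w·e₄ + cos t·e₅ + sin t·e₆, Z₄ = cos w·e₃ + sin w·e₄ − w·sin t·e₅ + w·cos t·e₆, and T = span{Z₁, Z₂, Z₃, Z₄, e₇}. Let P : T → T denote the map sending Y ∈ T to the orthogonal projection of φY onto T. Then P maps span{Z₃, Z₄} into itself, and for every X ∈ span{Z₃, Z₄} one has P(P(X)) = −((t − w)² / ((t² + 1)(w² + 1))) · X. -/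
/-! `P` swaps `Z₃` and `Z₄` up to scalars: `φ Z₃` is `(t - w) / (w ^ 2 + 1) • Z₄` plus a
vector orthogonal to `T`, and `φ Z₄` is `(w - t) / (t ^ 2 + 1) • Z₃` plus a vector orthogonal
to `T` (orthogonality to `Z₃` and `Z₄` is `sin ^ 2 + cos ^ 2 = 1` for the angles `w` and `t`).
Hence `P Z₃` and `P Z₄` are these multiples, and `P ∘ P` acts on `span {Z₃, Z₄}` as
multiplication by their product. -/

open Real Submodule

theorem Submodule.starProjection_span_add_eq_of_inner_eq_zero {𝕜 E : Type*} [RCLike 𝕜]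
    [NormedAddCommGroup E] [InnerProductSpace 𝕜 E] {s : Set E}
    [(span 𝕜 s).HasOrthogonalProjection] {y z : E} (hy : y ∈ span 𝕜 s)
    (hz : ∀ u ∈ s, inner 𝕜 u z = 0) : (span 𝕜 s).starProjection (y + z) = y :=
  eq_starProjection_of_mem_orthogonal' hy
    ((isOrtho_span.mpr fun _ hu _ hv => by rw [Set.mem_singleton_iff.mp hv]; exact hz _ hu).ge
      (mem_span_singleton_self z)) rfl

theorem LinearMap.mapsTo_span_pair_of_apply_eq_smul {R M : Type*} [CommSemiring R]
    [AddCommMonoid M] [Module R M] (f : M →ₗ[R] M) {u v : M} {a b : R}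
    (hu : f u = a • v) (hv : f v = b • u) :
    Set.MapsTo f (span R {u, v}) (span R {u, v}) := by
  intro X hX
  obtain ⟨c, d, rfl⟩ := mem_span_pair.mp hX
  rw [map_add, map_smul, map_smul, hu, hv, smul_smul, smul_smul, add_comm]
  exact mem_span_pair.mpr ⟨_, _, rfl⟩

theorem LinearMap.apply_apply_of_apply_eq_smul {R M : Type*} [CommSemiring R]
    [AddCommMonoid M] [Module R M] (f : M →ₗ[R] M) {u v : M} {a b : R}
    (hu : f u = a • v) (hv : f v = b • u) {X : M} (hX : X ∈ span R {u, v}) :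
    f (f X) = (a * b) • X := by
  obtain ⟨c, d, rfl⟩ := mem_span_pair.mp hX
  simp only [map_add, map_smul, hu, hv]
  module

namespace ContactExample

noncomputable section

variable {E : Type*} [NormedAddCommGroup E] [InnerProductSpace ℝ E] (e : Fin 7 → E) (w t : ℝ)

def Z₃ : E := (-(t * sin w)) • e 2 + (t * cos w) • e 3 + cos t • e 4 + sin t • e 5

def Z₄ : E := cos w • e 2 + sin w • e 3 + (-(w * sin t)) • e 4 + (w * cos t) • e 5

def N₃ : E := (w * cos w) • e 2 + (w * sin w) • e 3 + sin t • e 4 + (-cos t) • e 5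

def N₄ : E := sin w • e 2 + (-cos w) • e 3 + (t * cos t) • e 4 + (t * sin t) • e 5

variable {e} {φ : E →ₗ[ℝ] E}

theorem apply_Z₃ (h₂ : φ (e 2) = -e 3) (h₃ : φ (e 3) = e 2)
    (h₄ : φ (e 4) = -e 5) (h₅ : φ (e 5) = e 4) :
    φ (Z₃ e w t) =
      ((t - w) / (w ^ 2 + 1)) • Z₄ e w t + ((1 + t * w) / (w ^ 2 + 1)) • N₃ e w t := by
  have : w ^ 2 + 1 ≠ 0 := by positivity
  simp only [Z₃, Z₄, N₃, map_add, map_smul, h₂, h₃, h₄, h₅]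
  match_scalars <;> field_simp <;> ring

theorem apply_Z₄ (h₂ : φ (e 2) = -e 3) (h₃ : φ (e 3) = e 2)
    (h₄ : φ (e 4) = -e 5) (h₅ : φ (e 5) = e 4) :
    φ (Z₄ e w t) =
      ((w - t) / (t ^ 2 + 1)) • Z₃ e w t + ((1 + t * w) / (t ^ 2 + 1)) • N₄ e w t := by
  have : t ^ 2 + 1 ≠ 0 := by positivity
  simp only [Z₃, Z₄, N₄, map_add, map_smul, h₂, h₃, h₄, h₅]
  match_scalars <;> field_simp <;> ring

theorem inner_N₃_eq_zero (he : Orthonormal ℝ e) :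
    ∀ u ∈ ({e 0 - e 1, e 0 + e 1, Z₃ e w t, Z₄ e w t, e 6} : Set E),
      inner ℝ u (N₃ e w t) = 0 := by
  have hinner := orthonormal_iff_ite.mp he
  simp only [Set.mem_insert_iff, Set.mem_singleton_iff, forall_eq_or_imp, forall_eq]
  simp +decide only [Z₃, Z₄, N₃, inner_add_left, inner_add_right, inner_sub_left,
    real_inner_smul_left, real_inner_smul_right, hinner, ↓reduceIte, mul_zero, sub_self, add_zero,
    mul_one, mul_neg, zero_add, neg_mul, and_true, true_and]
  exact ⟨by ring, by linear_combination w * (sin_sq_add_cos_sq w - sin_sq_add_cos_sq t)⟩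

theorem inner_N₄_eq_zero (he : Orthonormal ℝ e) :
    ∀ u ∈ ({e 0 - e 1, e 0 + e 1, Z₃ e w t, Z₄ e w t, e 6} : Set E),
      inner ℝ u (N₄ e w t) = 0 := by
  have hinner := orthonormal_iff_ite.mp he
  simp only [Set.mem_insert_iff, Set.mem_singleton_iff, forall_eq_or_imp, forall_eq]
  simp +decide only [Z₃, Z₄, N₄, inner_add_left, inner_add_right, inner_sub_left,
    real_inner_smul_left, real_inner_smul_right, hinner, ↓reduceIte, mul_zero, sub_self, add_zero,
    mul_one, mul_neg, zero_add, neg_mul, and_true, true_and]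
  exact ⟨by linear_combination t * (sin_sq_add_cos_sq t - sin_sq_add_cos_sq w), by ring⟩

end

end ContactExample

theorem stmt_11_general (w t : ℝ)
    (e : Fin 7 → EuclideanSpace ℝ (Fin 7))
    (he : ∀ i, e i = EuclideanSpace.single i 1)
    (φ : EuclideanSpace ℝ (Fin 7) →ₗ[ℝ] EuclideanSpace ℝ (Fin 7))
    (h3 : φ (e 2) = -e 3) (h4 : φ (e 3) = e 2)
    (h5 : φ (e 4) = -e 5) (h6 : φ (e 5) = e 4)
    (Z₁ Z₂ Z₃ Z₄ : EuclideanSpace ℝ (Fin 7))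
    (hZ₁ : Z₁ = e 0 - e 1) (hZ₂ : Z₂ = e 0 + e 1)
    (hZ₃ : Z₃ = (-(t * Real.sin w)) • e 2 + (t * Real.cos w) • e 3 +
      Real.cos t • e 4 + Real.sin t • e 5)
    (hZ₄ : Z₄ = Real.cos w • e 2 + Real.sin w • e 3 +
      (-(w * Real.sin t)) • e 4 + (w * Real.cos t) • e 5)
    (T : Submodule ℝ (EuclideanSpace ℝ (Fin 7)))
    (hT : T = Submodule.span ℝ {Z₁, Z₂, Z₃, Z₄, e 6})
    (P : EuclideanSpace ℝ (Fin 7) → EuclideanSpace ℝ (Fin 7))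
    (hP : ∀ Y, P Y = (T.orthogonalProjection (φ Y) : EuclideanSpace ℝ (Fin 7))) :
    ∀ X ∈ Submodule.span ℝ {Z₃, Z₄},
      P X ∈ Submodule.span ℝ {Z₃, Z₄} ∧
      P (P X) = (-((t - w) ^ 2 / ((t ^ 2 + 1) * (w ^ 2 + 1)))) • X := by
  have he : Orthonormal ℝ e := funext he ▸ EuclideanSpace.orthonormal_single
  obtain rfl : P = ⇑((T.starProjection : _ →ₗ[ℝ] _) ∘ₗ φ) := funext hP
  obtain rfl : Z₃ = ContactExample.Z₃ e w t := hZ₃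
  obtain rfl : Z₄ = ContactExample.Z₄ e w t := hZ₄
  subst hZ₁ hZ₂
  have hPZ₃ : T.starProjection (φ (ContactExample.Z₃ e w t)) =
      ((t - w) / (w ^ 2 + 1)) • ContactExample.Z₄ e w t := by
    rw [ContactExample.apply_Z₃ w t h3 h4 h5 h6]
    subst hT
    refine starProjection_span_add_eq_of_inner_eq_zero ?_ fun u hu => ?_
    · exact smul_mem _ _ (subset_span (by simp))
    · rw [real_inner_smul_right, ContactExample.inner_N₃_eq_zero w t he u hu, mul_zero]
  have hPZ₄ : T.starProjection (φ (ContactExample.Z₄ e w t)) =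
      ((w - t) / (t ^ 2 + 1)) • ContactExample.Z₃ e w t := by
    rw [ContactExample.apply_Z₄ w t h3 h4 h5 h6]
    subst hT
    refine starProjection_span_add_eq_of_inner_eq_zero ?_ fun u hu => ?_
    · exact smul_mem _ _ (subset_span (by simp))
    · rw [real_inner_smul_right, ContactExample.inner_N₄_eq_zero w t he u hu, mul_zero]
  have hscalar : (t - w) / (w ^ 2 + 1) * ((w - t) / (t ^ 2 + 1)) =
      -((t - w) ^ 2 / ((t ^ 2 + 1) * (w ^ 2 + 1))) := by
    field_simp
    ring
  intro X hX
  rw [← hscalar]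
  exact ⟨LinearMap.mapsTo_span_pair_of_apply_eq_smul (_ ∘ₗ φ) hPZ₃ hPZ₄ hX,
    LinearMap.apply_apply_of_apply_eq_smul (_ ∘ₗ φ) hPZ₃ hPZ₄ hX⟩

/-- In `ℝ⁷` with the contact structure `φ` (and `ξ = e₇`), for real
parameters `w, t`, with `Z₁, Z₂, Z₃, Z₄` as in the example and
`T = span{Z₁, Z₂, Z₃, Z₄, e₇}`, let `P` send `Y` to the orthogonal projection of
`φY` onto `T`. Then `P` maps `span{Z₃, Z₄}` into itself, and for every
`X ∈ span{Z₃, Z₄}` one has `P(P X) = −((t − w)² / ((t² + 1)(w² + 1))) • X`. -/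
theorem stmt_11 (w t : ℝ)
    (e : Fin 7 → EuclideanSpace ℝ (Fin 7))
    (he : ∀ i, e i = EuclideanSpace.single i 1)
    (φ : EuclideanSpace ℝ (Fin 7) →ₗ[ℝ] EuclideanSpace ℝ (Fin 7))
    (h1 : φ (e 0) = -e 1) (h2 : φ (e 1) = e 0)
    (h3 : φ (e 2) = -e 3) (h4 : φ (e 3) = e 2)
    (h5 : φ (e 4) = -e 5) (h6 : φ (e 5) = e 4)
    (h7 : φ (e 6) = 0) (ξ : EuclideanSpace ℝ (Fin 7)) (hξ : ξ = e 6)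
    (Z₁ Z₂ Z₃ Z₄ : EuclideanSpace ℝ (Fin 7))
    (hZ₁ : Z₁ = e 0 - e 1) (hZ₂ : Z₂ = e 0 + e 1)
    (hZ₃ : Z₃ = (-(t * Real.sin w)) • e 2 + (t * Real.cos w) • e 3 +
      Real.cos t • e 4 + Real.sin t • e 5)
    (hZ₄ : Z₄ = Real.cos w • e 2 + Real.sin w • e 3 +
      (-(w * Real.sin t)) • e 4 + (w * Real.cos t) • e 5)
    (T : Submodule ℝ (EuclideanSpace ℝ (Fin 7)))
    (hT : T = Submodule.span ℝ {Z₁, Z₂, Z₃, Z₄, e 6})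
    (P : EuclideanSpace ℝ (Fin 7) → EuclideanSpace ℝ (Fin 7))
    (hP : ∀ Y, P Y = (T.orthogonalProjection (φ Y) : EuclideanSpace ℝ (Fin 7))) :
    ∀ X ∈ Submodule.span ℝ {Z₃, Z₄},
      P X ∈ Submodule.span ℝ {Z₃, Z₄} ∧
      P (P X) = (-((t - w) ^ 2 / ((t ^ 2 + 1) * (w ^ 2 + 1)))) • X :=
  stmt_11_general w t e he φ h3 h4 h5 h6 Z₁ Z₂ Z₃ Z₄ hZ₁ hZ₂ hZ₃ hZ₄ T hT P hP
end
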